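/- (Discrete nabla fractional Poincaré inequality.) Let μ > 0 be non-integer with m = ⌈μ⌉, let p ∈ ℤ₊ with μ > p, and let a ∈ ℤ₊. Let b ∈ ℕ with a + m < b, and let f : [a−m+1, a−m+2, ..., b] → ℝ with ∇^k f(a) = 0 for k = p, ..., m−1. Let γ, δ > 1 with 1/γ + 1/δ = 1. Then Σ_{j=a+m}^{b} |∇^p f(j)|^δ ≤ (1/Γ(μ−p)^δ) · { Σ_{j=a+m}^{b} ( Σ_{τ=a+1}^{j} ( (j−τ+1)^{↑(μ−p−1)} )^γ )^{δ/γ} } · ( Σ_{τ=a+1}^{b} |∇_{(a+1)*}^{μ} f(τ)|^δ ). -/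

import Mathlib

/-!
Write `∇_c^{-ν} f (t) = Σ_{s=c}^{t} K_ν(t - s) f(s)` with `K_ν(k) = (k+1)^{↑(ν-1)}/Γ(ν) = ν^{↑k}/k!`,
the multiset coefficient `multichoose ν k`. The Chu–Vandermonde identity for `multichoose` is the
semigroup law `∇^{-α} ∇^{-β} = ∇^{-(α+β)}`, and `∇^{-1} ∇ h (t) = h(t) - h(c-1)` telescopes. Hence
the vanishing of `∇^k f(a)` for `p ≤ k < m` gives the Taylor-type representation
`∇^p f = ∇_{a+1}^{-(μ-p)} ∇_{(a+1)*}^{μ} f` on `t ≥ a`. Hölder's inequality with exponents `γ, δ`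
bounds each `|∇^p f(j)|^δ`, and summing over `j` gives the inequality.
-/

open Finset

/-- Backward (nabla) difference: `∇f(t) = f(t) - f(t-1)`. -/
def nabla (f : ℤ → ℝ) : ℤ → ℝ := fun t => f t - f (t - 1)

/-- Rising factorial `t^{↑α} = Γ(t+α)/Γ(t)`. -/
noncomputable def risingFac (t α : ℝ) : ℝ := Real.Gamma (t + α) / Real.Gamma t

/-- The `ν`-th order nabla fractional sum `∇_a^{-ν} f (t) = Σ_{s=a}^{t} (t-s+1)^{↑(ν-1)}/Γ(ν) · f(s)`. -/
noncomputable def fracSum (ν : ℝ) (a : ℤ) (f : ℤ → ℝ) : ℤ → ℝ := fun t =>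
  ∑ s ∈ Finset.Icc a t, risingFac ((t - s + 1 : ℤ) : ℝ) (ν - 1) / Real.Gamma ν * f s

/-- Caputo-like nabla fractional difference `∇_{a*}^{μ} f = ∇_a^{-(m-μ)} (∇^m f)`, `m = ⌈μ⌉`. -/
noncomputable def caputoNabla (μ : ℝ) (a : ℤ) (f : ℤ → ℝ) : ℤ → ℝ :=
  fracSum ((⌈μ⌉₊ : ℝ) - μ) a (nabla^[⌈μ⌉₊] f)

theorem Ring.multichoose_add {R : Type*} [CommRing R] [BinomialRing R] (r s : R) (n : ℕ) :
    multichoose (r + s) n = ∑ ij ∈ antidiagonal n, multichoose r ij.1 * multichoose s ij.2 := by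
  have h := add_choose_eq n (Commute.all (-r) (-s))
  rw [← neg_add, choose_neg'] at h
  simp_rw [choose_neg', smul_mul_smul_comm, ← Int.negOnePow_add] at h
  rw [sum_congr rfl fun ij hij => by
    rw [← Nat.cast_add, HasAntidiagonal.mem_antidiagonal.mp hij], ← smul_sum] at h
  exact smul_left_cancel _ h

theorem Real.Gamma_add_nat_eq_mul_ascPochhammer {α : ℝ} (hα : ∀ k : ℕ, α ≠ -k) (n : ℕ) :
    Gamma (α + n) = Gamma α * (ascPochhammer ℝ n).eval α := by
  induction n with
  | zero => simp
  | succ n ih =>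
    have hn : α + n ≠ 0 := fun h => hα n (by linarith)
    rw [Nat.cast_succ, ← add_assoc, Gamma_add_one hn, ih, ascPochhammer_succ_eval]
    ring

theorem risingFac_sub_add_one_pos {ν : ℝ} (hν : 0 < ν) {τ t : ℤ} (h : τ ≤ t) :
    0 < risingFac ((t - τ + 1 : ℤ) : ℝ) (ν - 1) := by
  have : (1 : ℝ) ≤ ((t - τ + 1 : ℤ) : ℝ) := by exact_mod_cast (by omega : (1 : ℤ) ≤ t - τ + 1)
  exact div_pos (Real.Gamma_pos_of_pos (by linarith)) (Real.Gamma_pos_of_pos (by linarith))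

noncomputable def nablaKernel (ν : ℝ) (k : ℤ) : ℝ :=
  risingFac ((k + 1 : ℤ) : ℝ) (ν - 1) / Real.Gamma ν

theorem fracSum_eq_sum_nablaKernel (ν : ℝ) (c : ℤ) (f : ℤ → ℝ) (t : ℤ) :
    fracSum ν c f t = ∑ s ∈ Icc c t, nablaKernel ν (t - s) * f s :=
  rfl

theorem nablaKernel_natCast {ν : ℝ} (hν : 0 < ν) (k : ℕ) :
    nablaKernel ν k = Ring.multichoose ν k := by
  have hν' : ∀ n : ℕ, ν ≠ -n := fun n h => by linarith [h ▸ hν, n.cast_nonneg (α := ℝ)]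
  have hfac : (k.factorial : ℝ) ≠ 0 := by positivity
  have hmc : Ring.multichoose ν k = (ascPochhammer ℝ k).eval ν / k.factorial := by
    rw [eq_div_iff hfac, ← Polynomial.ascPochhammer_smeval_eq_eval,
      ← Ring.factorial_nsmul_multichoose_eq_ascPochhammer, nsmul_eq_mul, mul_comm]
  rw [nablaKernel, risingFac, hmc, Int.cast_add, Int.cast_natCast, Int.cast_one,
    show (k : ℝ) + 1 + (ν - 1) = ν + k by ring, Real.Gamma_nat_eq_factorial,
    Real.Gamma_add_nat_eq_mul_ascPochhammer hν']
  field_simp [(Real.Gamma_pos_of_pos hν).ne']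

theorem sum_nablaKernel_mul_nablaKernel {α β : ℝ} (hα : 0 < α) (hβ : 0 < β) {τ t : ℤ}
    (h : τ ≤ t) :
    ∑ s ∈ Icc τ t, nablaKernel α (t - s) * nablaKernel β (s - τ) =
      nablaKernel (α + β) (t - τ) := by
  obtain ⟨n, hn⟩ : ∃ n : ℕ, t - τ = n := ⟨(t - τ).toNat, by omega⟩
  rw [hn, nablaKernel_natCast (add_pos hα hβ), Ring.multichoose_add]
  refine sum_nbij' (fun s => ((t - s).toNat, (s - τ).toNat)) (fun ij => τ + ij.2)
    ?_ ?_ ?_ ?_ fun s hs => ?_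
  all_goals simp only [mem_Icc, HasAntidiagonal.mem_antidiagonal, Prod.ext_iff] at *
  iterate 4 (intros; omega)
  rw [← nablaKernel_natCast hα, ← nablaKernel_natCast hβ, Int.toNat_of_nonneg (by omega),
    Int.toNat_of_nonneg (by omega)]

theorem fracSum_congr {ν : ℝ} {c t : ℤ} {f g : ℤ → ℝ} (hfg : ∀ s ∈ Icc c t, f s = g s) :
    fracSum ν c f t = fracSum ν c g t :=
  sum_congr rfl fun s hs => by rw [hfg s hs]

theorem fracSum_fracSum {α β : ℝ} (hα : 0 < α) (hβ : 0 < β) (c : ℤ) (h : ℤ → ℝ) (t : ℤ) :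
    fracSum α c (fracSum β c h) t = fracSum (α + β) c h t := by
  simp only [fracSum_eq_sum_nablaKernel]
  calc ∑ s ∈ Icc c t, nablaKernel α (t - s) * ∑ u ∈ Icc c s, nablaKernel β (s - u) * h u
      = ∑ u ∈ Icc c t, ∑ s ∈ Icc u t, nablaKernel α (t - s) * (nablaKernel β (s - u) * h u) := by
        simp_rw [mul_sum]
        exact sum_comm' fun s u => by simp only [mem_Icc]; omega
    _ = ∑ u ∈ Icc c t, nablaKernel (α + β) (t - u) * h u := by
        refine sum_congr rfl fun u hu => ?_
        rw [← sum_nablaKernel_mul_nablaKernel hα hβ (mem_Icc.mp hu).2, sum_mul]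
        simp_rw [mul_assoc]

theorem sum_Icc_nabla (h : ℤ → ℝ) {c t : ℤ} (ht : c - 1 ≤ t) :
    ∑ s ∈ Icc c t, nabla h s = h t - h (c - 1) := by
  induction t, ht using Int.leInduction with
  | base => simp
  | succ t ht ih =>
    rw [← Finset.insert_Icc_right_eq_Icc_add_one (by omega), sum_insert (by simp), ih, nabla,
      add_sub_cancel_right]
    ring

theorem fracSum_one_nabla (h : ℤ → ℝ) {c t : ℤ} (ht : c - 1 ≤ t) :
    fracSum 1 c (nabla h) t = h t - h (c - 1) := by
  rw [fracSum_eq_sum_nablaKernel, ← sum_Icc_nabla h ht]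
  refine sum_congr rfl fun s hs => ?_
  obtain ⟨k, hk⟩ : ∃ k : ℕ, t - s = k := ⟨(t - s).toNat, by simp only [mem_Icc] at hs; omega⟩
  rw [hk, nablaKernel_natCast one_pos, Ring.multichoose_one, one_mul]

theorem fracSum_natCast_iterate_nabla {r : ℕ} (hr : 1 ≤ r) {c : ℤ} {h : ℤ → ℝ}
    (hz : ∀ i < r, nabla^[i] h (c - 1) = 0) {t : ℤ} (ht : c - 1 ≤ t) :
    fracSum r c (nabla^[r] h) t = h t := by
  induction r, hr using Nat.le_induction generalizing h t with
  | base =>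
    simpa [show h (c - 1) = 0 from hz 0 one_pos] using fracSum_one_nabla h ht
  | succ r hr ih =>
    have hz' : ∀ i < r, nabla^[i] (nabla h) (c - 1) = 0 := fun i hi => by
      rw [← Function.iterate_succ_apply]
      exact hz (i + 1) (by omega)
    rw [Function.iterate_succ_apply, Nat.cast_succ, add_comm,
      ← fracSum_fracSum one_pos (by exact_mod_cast hr),
      fracSum_congr fun s hs => ih hz' (by simp only [mem_Icc] at hs; omega),
      fracSum_one_nabla h ht, show h (c - 1) = 0 from hz 0 (by omega), sub_zero]

theorem iterate_nabla_eq_fracSum_caputoNabla {μ : ℝ} (hμ : μ < ⌈μ⌉₊) {p : ℕ} (hp : (p : ℝ) < μ)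
    {a : ℤ} {f : ℤ → ℝ} (hf : ∀ k, p ≤ k → k < ⌈μ⌉₊ → nabla^[k] f a = 0) {t : ℤ} (ht : a ≤ t) :
    nabla^[p] f t = fracSum (μ - p) (a + 1) (caputoNabla μ (a + 1) f) t := by
  have hpm : p < ⌈μ⌉₊ := by exact_mod_cast hp.trans hμ
  have hord : (μ - p) + ((⌈μ⌉₊ : ℝ) - μ) = ((⌈μ⌉₊ - p : ℕ) : ℝ) := by
    rw [Nat.cast_sub hpm.le]
    ring
  rw [caputoNabla, fracSum_fracSum (sub_pos.mpr hp) (sub_pos.mpr hμ), hord,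
    ← Nat.sub_add_cancel hpm.le, Function.iterate_add_apply, Nat.add_sub_cancel]
  refine (fracSum_natCast_iterate_nabla (by omega) (fun i hi => ?_) (by omega)).symm
  rw [add_sub_cancel_right, ← Function.iterate_add_apply]
  exact hf (i + p) (by omega) (by omega)

theorem abs_sum_mul_rpow_le {ι : Type*} (s : Finset ι) {w : ι → ℝ} (hw : ∀ i ∈ s, 0 ≤ w i)
    (g : ι → ℝ) {γ δ : ℝ} (hγδ : γ.HolderConjugate δ) :
    |∑ i ∈ s, w i * g i| ^ δ ≤ (∑ i ∈ s, w i ^ γ) ^ (δ / γ) * ∑ i ∈ s, |g i| ^ δ := by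
  have hA : 0 ≤ ∑ i ∈ s, w i ^ γ := sum_nonneg fun i hi => Real.rpow_nonneg (hw i hi) γ
  have hB : 0 ≤ ∑ i ∈ s, |g i| ^ δ := sum_nonneg fun i _ => Real.rpow_nonneg (abs_nonneg _) δ
  have holder : |∑ i ∈ s, w i * g i| ≤
      (∑ i ∈ s, w i ^ γ) ^ (1 / γ) * (∑ i ∈ s, |g i| ^ δ) ^ (1 / δ) :=
    calc |∑ i ∈ s, w i * g i| ≤ ∑ i ∈ s, w i * |g i| := by
          refine (abs_sum_le_sum_abs _ _).trans_eq (sum_congr rfl fun i hi => ?_)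
          rw [abs_mul, abs_of_nonneg (hw i hi)]
      _ ≤ _ := Real.inner_le_Lp_mul_Lq_of_nonneg s hγδ hw fun i _ => abs_nonneg _
  calc |∑ i ∈ s, w i * g i| ^ δ
      ≤ ((∑ i ∈ s, w i ^ γ) ^ (1 / γ) * (∑ i ∈ s, |g i| ^ δ) ^ (1 / δ)) ^ δ :=
        Real.rpow_le_rpow (abs_nonneg _) holder hγδ.symm.nonneg
    _ = _ := by
        rw [Real.mul_rpow (by positivity) (by positivity), ← Real.rpow_mul hA, ← Real.rpow_mul hB,
          one_div_mul_cancel hγδ.symm.ne_zero, Real.rpow_one, one_div_mul_eq_div]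

theorem abs_fracSum_rpow_le {ν : ℝ} (hν : 0 < ν) (c t : ℤ) (g : ℤ → ℝ) {γ δ : ℝ}
    (hγδ : γ.HolderConjugate δ) :
    |fracSum ν c g t| ^ δ ≤ 1 / Real.Gamma ν ^ δ *
      (∑ τ ∈ Icc c t, risingFac ((t - τ + 1 : ℤ) : ℝ) (ν - 1) ^ γ) ^ (δ / γ) *
        ∑ τ ∈ Icc c t, |g τ| ^ δ := by
  have hΓ := Real.Gamma_pos_of_pos hν
  have hw : ∀ τ ∈ Icc c t, 0 ≤ risingFac ((t - τ + 1 : ℤ) : ℝ) (ν - 1) := fun τ hτ =>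
    (risingFac_sub_add_one_pos hν (mem_Icc.mp hτ).2).le
  have hsum : fracSum ν c g t =
      1 / Real.Gamma ν * ∑ τ ∈ Icc c t, risingFac ((t - τ + 1 : ℤ) : ℝ) (ν - 1) * g τ := by
    rw [fracSum, mul_sum]
    exact sum_congr rfl fun τ _ => by ring
  rw [hsum, abs_mul, abs_of_pos (by positivity), Real.mul_rpow (by positivity) (abs_nonneg _),
    Real.div_rpow zero_le_one hΓ.le, Real.one_rpow, mul_assoc]
  gcongr
  exact abs_sum_mul_rpow_le _ hw g hγδ

theorem discrete_nabla_fractional_poincare_general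
    (μ : ℝ) (hμint : ∀ n : ℤ, μ ≠ n)
    (m : ℕ) (hm : m = ⌈μ⌉₊)
    (p : ℕ) (hp : (p : ℝ) < μ) (a : ℕ)
    (b : ℤ)
    (f : ℤ → ℝ)
    (hf0 : ∀ k, p ≤ k → k ≤ m - 1 → nabla^[k] f a = 0)
    (γ δ : ℝ) (hγ : 1 < γ) (hγδ : 1 / γ + 1 / δ = 1) :
    ∑ j ∈ Finset.Icc ((a : ℤ) + m) b, |nabla^[p] f j| ^ δ ≤
      (1 / Real.Gamma (μ - p) ^ δ) *
        (∑ j ∈ Finset.Icc ((a : ℤ) + m) b,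
          (∑ τ ∈ Finset.Icc ((a : ℤ) + 1) j,
            risingFac ((j - τ + 1 : ℤ) : ℝ) (μ - p - 1) ^ γ) ^ (δ / γ)) *
        (∑ τ ∈ Finset.Icc ((a : ℤ) + 1) b,
          |caputoNabla μ ((a : ℤ) + 1) f τ| ^ δ) := by
  subst hm
  have hμm : μ < ⌈μ⌉₊ := (Nat.le_ceil μ).lt_of_ne fun h => hμint ⌈μ⌉₊ (by exact_mod_cast h)
  have hμp : 0 < μ - p := sub_pos.mpr hp
  have hγδ' : γ.HolderConjugate δ :=
    Real.holderConjugate_iff.mpr ⟨hγ, by simpa only [one_div] using hγδ⟩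
  rw [mul_assoc, sum_mul, mul_sum]
  refine sum_le_sum fun j hj => ?_
  have hj := mem_Icc.mp hj
  rw [iterate_nabla_eq_fracSum_caputoNabla hμm hp (fun k hpk hkm => hf0 k hpk (by omega))
    (by omega), ← mul_assoc]
  refine (abs_fracSum_rpow_le hμp _ _ _ hγδ').trans (mul_le_mul_of_nonneg_left ?_ ?_)
  · exact sum_le_sum_of_subset_of_nonneg (Icc_subset_Icc_right hj.2)
      fun τ _ _ => Real.rpow_nonneg (abs_nonneg _) δ
  · have hw := fun τ (hτ : τ ∈ Icc ((a : ℤ) + 1) j) =>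
      Real.rpow_nonneg (risingFac_sub_add_one_pos hμp (mem_Icc.mp hτ).2).le γ
    exact mul_nonneg (by positivity) (Real.rpow_nonneg (sum_nonneg hw) _)

/-- Discrete nabla fractional Poincaré inequality. -/
theorem discrete_nabla_fractional_poincare
    (μ : ℝ) (hμ : 0 < μ) (hμint : ∀ n : ℤ, μ ≠ n)
    (m : ℕ) (hm : m = ⌈μ⌉₊)
    (p : ℕ) (hp : (p : ℝ) < μ) (a : ℕ)
    (b : ℤ) (hb : (a : ℤ) + m < b)
    (f : ℤ → ℝ)
    (hf0 : ∀ k, p ≤ k → k ≤ m - 1 → nabla^[k] f a = 0)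
    (γ δ : ℝ) (hγ : 1 < γ) (hδ : 1 < δ) (hγδ : 1 / γ + 1 / δ = 1) :
    ∑ j ∈ Finset.Icc ((a : ℤ) + m) b, |nabla^[p] f j| ^ δ ≤
      (1 / Real.Gamma (μ - p) ^ δ) *
        (∑ j ∈ Finset.Icc ((a : ℤ) + m) b,
          (∑ τ ∈ Finset.Icc ((a : ℤ) + 1) j,
            risingFac ((j - τ + 1 : ℤ) : ℝ) (μ - p - 1) ^ γ) ^ (δ / γ)) *
        (∑ τ ∈ Finset.Icc ((a : ℤ) + 1) b,
          |caputoNabla μ ((a : ℤ) + 1) f τ| ^ δ) :=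
  discrete_nabla_fractional_poincare_general μ hμint m hm p hp a b f hf0 γ δ hγ hγδ
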